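/- Let A be a complex unital Banach algebra, exp : A → A the exponential given by the power series ∑_{n=0}^{∞} xⁿ/n!, and τ : A → ℂ a continuous ℂ-linear functional satisfying τ(xy) = τ(yx) for all x, y ∈ A. Let a : ℝ → A, t ∈ ℝ, and suppose a has derivative a' ∈ A at t and the function s ↦ exp(a(s)) has derivative v ∈ A at t. Then τ(exp(−a(t))·v) = τ(a'). -/

import Mathlib

/-!
Both sides are the derivative at `t` of `s ↦ τ (exp (-c) * exp (a s))`, where `c = a t`. For the
right side: `r ↦ exp (-r c) * exp (r b)` has derivative `exp (-r c) * (b - c) * exp (r b)`, which by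
cyclicity has the same trace as `exp (-r c) * exp (r b) * (b - c)`. Integrating over `[0, 1]` gives
`τ (exp (-c) * exp b) = τ 1 + τ (M b * (b - c))` with `M b = ∫₀¹ exp (-r c) * exp (r b) dr`, and since
`M` is continuous with `M c = 1`, the right-hand side has derivative `τ a'` along `b = a s`.
-/

open NormedSpace

theorem HasDerivAt.continuousAt_mul_of_eq_zero {𝕜 A : Type*} [NontriviallyNormedField 𝕜]
    [NormedRing A] [NormedAlgebra 𝕜 A] {M f : 𝕜 → A} {f' : A} {t : 𝕜}
    (hM : ContinuousAt M t) (hf : HasDerivAt f f' t) (hft : f t = 0) :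
    HasDerivAt (fun s => M s * f s) (M t * f') t := by
  rw [hasDerivAt_iff_tendsto_slope] at hf ⊢
  have hslope : slope (fun s => M s * f s) t = fun s => M s * slope f t s := by
    funext s
    simp only [slope_def_module, hft, mul_zero, sub_zero, mul_smul_comm]
  rw [hslope]
  exact (hM.tendsto.mono_left nhdsWithin_le_nhds).mul hf

section Duhamel

variable {A : Type*} [NormedRing A] [NormedAlgebra ℝ A] [CompleteSpace A]

noncomputable def duhamelIntegral (c b : A) : A :=
  ∫ r in (0 : ℝ)..1, exp (r • -c) * exp (r • b)

theorem continuous_duhamelIntegral [NormedAlgebra ℚ A] (c : A) : Continuous (duhamelIntegral c) :=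
  intervalIntegral.continuous_parametric_intervalIntegral_of_continuous' (by fun_prop) 0 1

theorem duhamelIntegral_self [NormedAlgebra ℚ A] (c : A) : duhamelIntegral c c = 1 := by
  have hinv (r : ℝ) : exp (r • -c) * exp (r • c) = 1 := by
    rw [← exp_add_of_commute ((Commute.refl c).neg_left.smul_left r |>.smul_right r), smul_neg,
      neg_add_cancel, exp_zero]
  simp only [duhamelIntegral, hinv, intervalIntegral.integral_const, sub_zero, one_smul]

variable {E : Type*} [NormedAddCommGroup E] [NormedSpace ℝ E] (τ : A →L[ℝ] E)

theorem hasDerivAt_trace_exp_smul_neg_mul_exp_smul (htr : ∀ x y : A, τ (x * y) = τ (y * x))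
    (c b : A) (r : ℝ) :
    HasDerivAt (fun r : ℝ => τ (exp (r • -c) * exp (r • b)))
      (τ (exp (r • -c) * exp (r • b) * (b - c))) r := by
  have hprod := (hasDerivAt_exp_smul_const' (-c) r).mul (hasDerivAt_exp_smul_const' b r)
  refine (τ.hasFDerivAt.comp_hasDerivAt r hprod).congr_deriv ?_
  set Y := exp (r • -c)
  set Z := exp (r • b)
  have hbZ : b * Z = Z * b := ((Commute.refl b).smul_right r).exp_right.eq
  calc τ (-c * Y * Z + Y * (b * Z)) = τ (-c * (Y * Z)) + τ (Y * Z * b) := by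
        rw [hbZ, map_add, mul_assoc, mul_assoc]
    _ = τ (Y * Z * (b - c)) := by
        rw [htr, mul_sub, map_sub, mul_neg, map_neg]
        abel

theorem trace_exp_neg_mul_exp [NormedAlgebra ℚ A] [CompleteSpace E]
    (htr : ∀ x y : A, τ (x * y) = τ (y * x)) (c b : A) :
    τ (exp (-c) * exp b) = τ 1 + τ (duhamelIntegral c b * (b - c)) := by
  have hcont : Continuous fun r : ℝ => exp (r • -c) * exp (r • b) := by fun_prop
  have hFTC := intervalIntegral.integral_eq_sub_of_hasDerivAt
    (fun r _ => hasDerivAt_trace_exp_smul_neg_mul_exp_smul τ htr c b r)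
    ((τ.continuous.comp (hcont.mul continuous_const)).intervalIntegrable 0 1)
  have hpull := (τ.comp ((ContinuousLinearMap.mul ℝ A).flip (b - c))).intervalIntegral_comp_comm
    (hcont.intervalIntegrable (μ := MeasureTheory.volume) 0 1)
  simp only [ContinuousLinearMap.comp_apply, ContinuousLinearMap.flip_apply,
    ContinuousLinearMap.mul_apply'] at hpull
  rw [duhamelIntegral, ← hpull, hFTC]
  simp

end Duhamel

theorem stmt_12 (A : Type*) [NormedRing A] [NormedAlgebra ℂ A] [CompleteSpace A]
    (τ : A →L[ℂ] ℂ) (htr : ∀ x y : A, τ (x * y) = τ (y * x))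
    (a : ℝ → A) (t : ℝ) (a' v : A)
    (ha : HasDerivAt a a' t)
    (hv : HasDerivAt (fun s => NormedSpace.exp (a s)) v t) :
    τ (NormedSpace.exp (-(a t)) * v) = τ a' := by
  -- the continuity and addition lemmas for `exp` are stated for normed `ℚ`-algebras
  let _ : NormedAlgebra ℚ A := NormedAlgebra.restrictScalars ℚ ℂ A
  set c := a t
  have hv' : HasDerivAt (fun s => τ (exp (-c) * exp (a s))) (τ (exp (-c) * v)) t :=
    (τ.restrictScalars ℝ).hasFDerivAt.comp_hasDerivAt t (hv.const_mul _)
  have ha' : HasDerivAt (fun s => τ (exp (-c) * exp (a s))) (τ a') t := by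
    have hM : ContinuousAt (fun s => duhamelIntegral c (a s)) t :=
      (continuous_duhamelIntegral c).continuousAt.comp ha.continuousAt
    have h := HasDerivAt.continuousAt_mul_of_eq_zero hM (ha.sub_const c) (sub_self c)
    rw [duhamelIntegral_self, one_mul] at h
    have := ((τ.restrictScalars ℝ).hasFDerivAt.comp_hasDerivAt t h).const_add (τ 1)
    exact this.congr_of_eventuallyEq
      (.of_forall fun s => trace_exp_neg_mul_exp (τ.restrictScalars ℝ) htr c (a s))
  exact hv'.unique ha'
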